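/- Let (X_i)_{i≥1} be i.i.d. St. Petersburg payoffs and let ρ_n = (X_1 · X_2 · ⋯ · X_n)^{1/n} denote the geometric mean of the first n payoffs. Then ρ_n converges to 2 almost surely as n → ∞. -/

import Mathlib

open MeasureTheory ProbabilityTheory Filter

/-- A St. Petersburg payoff: a random variable taking the value `2 ^ k`
with probability `2 ^ (-(k+1))` for each natural number `k`. -/
def IsStPetersburg {Ω : Type*} [MeasurableSpace Ω] (μ : Measure Ω) (X : Ω → ℝ) : Prop :=
  Measurable X ∧ ∀ k : ℕ, μ {ω | X ω = 2 ^ k} = (1 / 2 : ENNReal) ^ (k + 1)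

lemma stp_tsum_half : ∑' k : ℕ, (1 / 2 : ENNReal) ^ (k + 1) = 1 := by
  simp only [_root_.pow_succ', ENNReal.tsum_mul_left, ENNReal.tsum_geometric]
  rw [one_div, ENNReal.one_sub_inv_two, inv_inv,
    ENNReal.inv_mul_cancel two_ne_zero ENNReal.ofNat_ne_top]

lemma stp_aux {Ω : Type*} [MeasurableSpace Ω] (μ : Measure Ω) [IsProbabilityMeasure μ]
    {X : Ω → ℝ} (h : IsStPetersburg μ X) :
    Integrable (fun ω => Real.log (X ω)) μ ∧
      (∫ ω, Real.log (X ω) ∂μ) = Real.log 2 ∧ (∀ᵐ ω ∂μ, 1 ≤ X ω) := by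
  obtain ⟨hm, hdist⟩ := h
  set A : ℕ → Set Ω := fun k => {ω | X ω = 2 ^ k} with hA
  have mA : ∀ k, MeasurableSet (A k) := fun k => hm (measurableSet_singleton _)
  have hinj : Function.Injective (fun k : ℕ => (2 : ℝ) ^ k) := by
    intro a b hab
    have : ((2 ^ a : ℕ) : ℝ) = ((2 ^ b : ℕ) : ℝ) := by push_cast; exact hab
    exact Nat.pow_right_injective le_rfl (Nat.cast_injective this)
  have disj : Pairwise (Function.onFun Disjoint A) := by
    intro i j hij
    refine Set.disjoint_left.2 fun ω hi hj => hij (hinj ?_)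
    simp only [A, Set.mem_setOf_eq] at hi hj
    exact hi.symm.trans hj
  have hU : μ (⋃ k, A k) = 1 := by
    rw [measure_iUnion disj mA]
    simp only [A, hdist]
    exact stp_tsum_half
  have hcompl : μ (⋃ k, A k)ᶜ = 0 := by
    rw [measure_compl (MeasurableSet.iUnion mA) (measure_ne_top μ _), hU, measure_univ,
      tsub_self]
  have haeU : ∀ᵐ ω ∂μ, ∃ k, X ω = 2 ^ k := by
    rw [ae_iff]
    convert hcompl using 2
    ext ω
    simp [A]
  have hge : ∀ᵐ ω ∂μ, 1 ≤ X ω := by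
    filter_upwards [haeU] with ω ⟨k, hk⟩
    rw [hk]; exact one_le_pow₀ one_le_two
  have hnn : ∀ᵐ ω ∂μ, 0 ≤ Real.log (X ω) := by
    filter_upwards [hge] with ω hω
    exact Real.log_nonneg hω
  -- a.e. rewrite of ofReal (log X) as a tsum of indicators
  have hfe : ∀ᵐ ω ∂μ, ENNReal.ofReal (Real.log (X ω)) =
      ∑' k : ℕ, Set.indicator (A k) (fun _ => ENNReal.ofReal (k * Real.log 2)) ω := by
    filter_upwards [haeU] with ω ⟨k0, hk0⟩
    have hmem : ω ∈ A k0 := hk0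
    rw [tsum_eq_single k0]
    · rw [Set.indicator_of_mem hmem, hk0, Real.log_pow]
    · intro k hk
      have : ω ∉ A k := fun hωk => hk (hinj (hωk.symm.trans hmem))
      exact Set.indicator_of_notMem this _
  have hL : ∫⁻ ω, ENNReal.ofReal (Real.log (X ω)) ∂μ = ENNReal.ofReal (Real.log 2) := by
    rw [lintegral_congr_ae hfe,
      lintegral_tsum (fun k => ((measurable_const.indicator (mA k)).aemeasurable))]
    have hterm : ∀ k : ℕ,
        ∫⁻ ω, Set.indicator (A k) (fun _ => ENNReal.ofReal (k * Real.log 2)) ω ∂μ =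
          ENNReal.ofReal ((k * Real.log 2) * (1 / 2 : ℝ) ^ (k + 1)) := by
      intro k
      rw [lintegral_indicator_const (mA k), hdist k]
      have hnn0 : (0 : ℝ) ≤ (k : ℝ) * Real.log 2 :=
        mul_nonneg (Nat.cast_nonneg k) (Real.log_nonneg one_le_two)
      conv_rhs => rw [ENNReal.ofReal_mul hnn0,
        ENNReal.ofReal_pow (by norm_num : (0:ℝ) ≤ 1/2)]
      norm_num
      rw [one_div, ENNReal.ofReal_inv_of_pos two_pos, ENNReal.ofReal_ofNat]
    simp only [hterm]
    rw [← ENNReal.ofReal_tsum_of_nonneg]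
    · congr 1
      have hsum : ∑' k : ℕ, (k : ℝ) * (1 / 2 : ℝ) ^ k = (1/2) / (1 - 1/2) ^ 2 :=
        tsum_coe_mul_geometric_of_norm_lt_one
          (by rw [Real.norm_of_nonneg] <;> norm_num)
      have : (fun k : ℕ => (k : ℝ) * Real.log 2 * (1 / 2 : ℝ) ^ (k + 1)) =
          fun k : ℕ => (Real.log 2 / 2) * ((k : ℝ) * (1 / 2 : ℝ) ^ k) := by
        funext k; ring
      rw [this, tsum_mul_left, hsum]
      ring
    · intro k; positivity
    · have : (fun k : ℕ => (k : ℝ) * Real.log 2 * (1 / 2 : ℝ) ^ (k + 1)) =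
          fun k : ℕ => (Real.log 2 / 2) * ((k : ℝ) * (1 / 2 : ℝ) ^ k) := by
        funext k; ring
      rw [this]
      exact ((hasSum_coe_mul_geometric_of_norm_lt_one (r := (1/2 : ℝ))
        (by rw [Real.norm_of_nonneg] <;> norm_num)).summable).mul_left _
  have hmeas : AEStronglyMeasurable (fun ω => Real.log (X ω)) μ :=
    (Real.measurable_log.comp hm).aestronglyMeasurable
  have hint : Integrable (fun ω => Real.log (X ω)) μ := by
    refine ⟨hmeas, ?_⟩
    rw [HasFiniteIntegral, lintegral_congr_ae (hnn.mono fun ω hω => by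
      rw [Real.enorm_eq_ofReal hω]), hL]
    exact ENNReal.ofReal_lt_top
  refine ⟨hint, ?_, hge⟩
  rw [integral_eq_lintegral_of_nonneg_ae hnn hmeas, hL,
    ENNReal.toReal_ofReal (Real.log_nonneg one_le_two)]

/-- Almost-sure form of Khinchin's Theorem I: the geometric mean
`ρ_n = (X₁ ⋯ X_n)^{1/n}` of i.i.d. St. Petersburg payoffs converges to 2
almost surely. -/
theorem khinchin_theorem_I_ae
    {Ω : Type*} [MeasurableSpace Ω] (μ : Measure Ω) [IsProbabilityMeasure μ]
    (X : ℕ → Ω → ℝ)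
    (hSP : ∀ i, IsStPetersburg μ (X i))
    (hIndep : iIndepFun X μ)
    (hIdent : ∀ i, IdentDistrib (X i) (X 0) μ μ) :
    ∀ᵐ ω ∂μ, Tendsto (fun n : ℕ => (∏ i ∈ Finset.range n, X i ω) ^ ((n : ℝ)⁻¹))
      atTop (nhds 2) := by
  set Y : ℕ → Ω → ℝ := fun i ω => Real.log (X i ω) with hY
  have hYint : Integrable (Y 0) μ := (stp_aux μ (hSP 0)).1
  have hYindep : Pairwise (Function.onFun (IndepFun · · μ) Y) := fun i j hij =>
    (hIndep.indepFun hij).comp Real.measurable_log Real.measurable_log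
  have hYident : ∀ i, IdentDistrib (Y i) (Y 0) μ μ := fun i =>
    (hIdent i).comp Real.measurable_log
  have hSL := strong_law_ae_real Y hYint hYindep hYident
  have hEY : (∫ ω, Y 0 ω ∂μ) = Real.log 2 := (stp_aux μ (hSP 0)).2.1
  have hge : ∀ᵐ ω ∂μ, ∀ i, 1 ≤ X i ω := by
    rw [ae_all_iff]; exact fun i => (stp_aux μ (hSP i)).2.2
  filter_upwards [hSL, hge] with ω h1 h2
  rw [hEY] at h1
  have key : Tendsto (fun n : ℕ => Real.exp ((∑ i ∈ Finset.range n, Y i ω) / n))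
      atTop (nhds (Real.exp (Real.log 2))) :=
    (Real.continuous_exp.continuousAt.tendsto).comp h1
  rw [Real.exp_log two_pos] at key
  refine key.congr fun n => ?_
  have hpos : (0 : ℝ) < ∏ i ∈ Finset.range n, X i ω :=
    Finset.prod_pos fun i _ => lt_of_lt_of_le one_pos (h2 i)
  simp only [hY]
  rw [Real.rpow_def_of_pos hpos, Real.log_prod
    (fun i _ => ne_of_gt (lt_of_lt_of_le one_pos (h2 i))), div_eq_mul_inv]
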